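/- arXiv:1601.04007 — 2 statements merged into one kernel-verified Lean document; each statement's English description precedes it below -/
import Mathlib

section
/- Let x ∈ ℝ be non-characteristic with aperture δ ∈ (0,1), let t ∈ [0, T(x)) and τ ∈ [0, t), and set (z₁,w₁) = (x + t − τ, τ) and (z₂,w₂) = (x − t + τ, τ). Then there exists C ≥ 1 depending only on δ such that for j = 1, 2: d((z_j,w_j),Γ) ≥ (1/C)·( d((x,t),Γ) + ‖(x,t) − (z_j,w_j)‖ ), where ‖·‖ is the Euclidean norm on ℝ². -/
open MeasureTheory Filter

noncomputable def distGamma (T : ℝ → ℝ) (x t : ℝ) : ℝ :=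
  sInf {r : ℝ | ∃ ξ : ℝ, r = Real.sqrt ((x - ξ)^2 + (t - T ξ)^2)}

lemma distGamma_set_nonempty (T : ℝ → ℝ) (x t : ℝ) :
    {r : ℝ | ∃ ξ : ℝ, r = Real.sqrt ((x - ξ)^2 + (t - T ξ)^2)}.Nonempty :=
  ⟨_, ⟨0, rfl⟩⟩

lemma distGamma_set_bddBelow (T : ℝ → ℝ) (x t : ℝ) :
    BddBelow {r : ℝ | ∃ ξ : ℝ, r = Real.sqrt ((x - ξ)^2 + (t - T ξ)^2)} :=
  ⟨0, fun r hr => by obtain ⟨ξ, rfl⟩ := hr; exact Real.sqrt_nonneg _⟩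

lemma distGamma_nonneg (T : ℝ → ℝ) (x t : ℝ) : 0 ≤ distGamma T x t :=
  le_csInf (distGamma_set_nonempty T x t)
    (fun r hr => by obtain ⟨ξ, rfl⟩ := hr; exact Real.sqrt_nonneg _)

lemma sqrt_tri (a b c d : ℝ) :
    Real.sqrt ((a + c)^2 + (b + d)^2) ≤ Real.sqrt (a^2 + b^2) + Real.sqrt (c^2 + d^2) := by
  have hA : (0:ℝ) ≤ a^2 + b^2 := by positivity
  have hB : (0:ℝ) ≤ c^2 + d^2 := by positivity
  have h1 : a * c + b * d ≤ Real.sqrt (a^2 + b^2) * Real.sqrt (c^2 + d^2) := by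
    have h2 : (a*c + b*d)^2 ≤ (a^2 + b^2) * (c^2 + d^2) := by nlinarith [sq_nonneg (a*d - b*c)]
    calc a*c + b*d ≤ |a*c + b*d| := le_abs_self _
      _ = Real.sqrt ((a*c + b*d)^2) := (Real.sqrt_sq_eq_abs _).symm
      _ ≤ Real.sqrt ((a^2 + b^2) * (c^2 + d^2)) := Real.sqrt_le_sqrt h2
      _ = Real.sqrt (a^2 + b^2) * Real.sqrt (c^2 + d^2) := Real.sqrt_mul hA _
  have hs : (a + c)^2 + (b + d)^2 ≤ (Real.sqrt (a^2 + b^2) + Real.sqrt (c^2 + d^2))^2 := by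
    have e1 := Real.sq_sqrt hA
    have e2 := Real.sq_sqrt hB
    nlinarith [Real.sqrt_nonneg (a^2 + b^2), Real.sqrt_nonneg (c^2 + d^2)]
  calc Real.sqrt ((a + c)^2 + (b + d)^2)
      ≤ Real.sqrt ((Real.sqrt (a^2 + b^2) + Real.sqrt (c^2 + d^2))^2) := Real.sqrt_le_sqrt hs
    _ = Real.sqrt (a^2 + b^2) + Real.sqrt (c^2 + d^2) := Real.sqrt_sq (by positivity)

lemma distGamma_tri (T : ℝ → ℝ) (x t z τ : ℝ) :
    distGamma T x t ≤ distGamma T z τ + Real.sqrt ((x - z)^2 + (t - τ)^2) := by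
  have h : distGamma T x t - Real.sqrt ((x - z)^2 + (t - τ)^2) ≤ distGamma T z τ := by
    apply le_csInf (distGamma_set_nonempty T z τ)
    rintro r ⟨ξ, rfl⟩
    have h1 : distGamma T x t ≤ Real.sqrt ((x - ξ)^2 + (t - T ξ)^2) :=
      csInf_le (distGamma_set_bddBelow T x t) ⟨ξ, rfl⟩
    have h2 : Real.sqrt ((x - ξ)^2 + (t - T ξ)^2)
        ≤ Real.sqrt ((z - ξ)^2 + (τ - T ξ)^2) + Real.sqrt ((x - z)^2 + (t - τ)^2) := by
      have := sqrt_tri (z - ξ) (τ - T ξ) (x - z) (t - τ)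
      have e1 : (z - ξ) + (x - z) = x - ξ := by ring
      have e2 : (τ - T ξ) + (t - τ) = t - T ξ := by ring
      rwa [e1, e2] at this
    linarith
  linarith

lemma distGamma_lower (T : ℝ → ℝ) (δ x t τ z : ℝ) (hδ0 : 0 < δ) (hδ1 : δ < 1)
    (hnc : ∀ ξ, T ξ ≥ T x - δ * |ξ - x|) (ht : t < T x) (hτ : τ < t)
    (hz : |z - x| = t - τ) :
    (1 - δ) * (t - τ) ≤ (1 + δ) * distGamma T z τ := by
  have key : ((1 - δ) * (t - τ)) / (1 + δ) ≤ distGamma T z τ := by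
    apply le_csInf (distGamma_set_nonempty T z τ)
    rintro r ⟨ξ, rfl⟩
    rw [div_le_iff₀ (by linarith : (0:ℝ) < 1 + δ)]
    have h1 : T ξ - τ ≤ Real.sqrt ((z - ξ)^2 + (τ - T ξ)^2) := by
      calc T ξ - τ ≤ |τ - T ξ| := by rw [abs_sub_comm]; exact le_abs_self _
        _ = Real.sqrt ((τ - T ξ)^2) := (Real.sqrt_sq_eq_abs _).symm
        _ ≤ Real.sqrt ((z - ξ)^2 + (τ - T ξ)^2) :=
            Real.sqrt_le_sqrt (by nlinarith [sq_nonneg (z - ξ)])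
    have h2 : |z - ξ| ≤ Real.sqrt ((z - ξ)^2 + (τ - T ξ)^2) := by
      calc |z - ξ| = Real.sqrt ((z - ξ)^2) := (Real.sqrt_sq_eq_abs _).symm
        _ ≤ Real.sqrt ((z - ξ)^2 + (τ - T ξ)^2) :=
            Real.sqrt_le_sqrt (by nlinarith [sq_nonneg (τ - T ξ)])
    have h3 : |ξ - x| - (t - τ) ≤ |z - ξ| := by
      have := abs_sub_le ξ z x
      rw [abs_sub_comm ξ z] at this
      linarith [hz ▸ this]
    have h4 := hnc ξ
    have h5 : 0 ≤ |ξ - x| := abs_nonneg _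
    nlinarith [Real.sqrt_nonneg ((z - ξ)^2 + (τ - T ξ)^2)]
  rw [div_le_iff₀ (by linarith : (0:ℝ) < 1 + δ)] at key
  linarith

theorem dist_coercivity_on_cone
    (δ : ℝ) (hδ : δ ∈ Set.Ioo (0 : ℝ) 1) :
    ∃ C : ℝ, 1 ≤ C ∧
      ∀ T : ℝ → ℝ, LipschitzWith 1 T → (∀ x, 0 < T x) →
      ∀ x : ℝ, (∀ ξ, T ξ ≥ T x - δ * |ξ - x|) →
      ∀ t τ, 0 ≤ t → t < T x → 0 ≤ τ → τ < t →
        distGamma T (x + t - τ) τ ≥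
          (1 / C) * (distGamma T x t + Real.sqrt ((x - (x + t - τ))^2 + (t - τ)^2)) ∧
        distGamma T (x - t + τ) τ ≥
          (1 / C) * (distGamma T x t + Real.sqrt ((x - (x - t + τ))^2 + (t - τ)^2)) := by
  obtain ⟨hδ0, hδ1⟩ := hδ
  refine ⟨(5 + 3*δ) / (1 - δ), ?_, ?_⟩
  · rw [le_div_iff₀ (by linarith : (0:ℝ) < 1 - δ)]; linarith
  intro T _ _ x hnc t τ _ ht _ hτ
  have hC : (0:ℝ) < (5 + 3*δ) / (1 - δ) := div_pos (by linarith) (by linarith)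
  have key : ∀ z : ℝ, |z - x| = t - τ →
      distGamma T z τ ≥
        (1 / ((5 + 3*δ) / (1 - δ))) *
          (distGamma T x t + Real.sqrt ((x - z)^2 + (t - τ)^2)) := by
    intro z hz
    set A := distGamma T x t with hA
    set B := distGamma T z τ with hB
    set N := Real.sqrt ((x - z)^2 + (t - τ)^2) with hNdef
    have hBnn : 0 ≤ B := distGamma_nonneg T z τ
    have htri : A ≤ B + N := distGamma_tri T x t z τ
    have hlow : (1 - δ) * (t - τ) ≤ (1 + δ) * B :=
      distGamma_lower T δ x t τ z hδ0 hδ1 hnc ht hτ hz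
    have hN2 : N ≤ 2 * (t - τ) := by
      have hxz : (x - z)^2 = (t - τ)^2 := by
        have : |x - z| = t - τ := by rw [abs_sub_comm]; exact hz
        calc (x - z)^2 = |x - z|^2 := (sq_abs _).symm
          _ = (t - τ)^2 := by rw [this]
      rw [hNdef, hxz]
      calc Real.sqrt ((t - τ)^2 + (t - τ)^2)
          ≤ Real.sqrt ((2 * (t - τ))^2) := Real.sqrt_le_sqrt (by nlinarith [sq_nonneg (t - τ)])
        _ = |2 * (t - τ)| := Real.sqrt_sq_eq_abs _
        _ = 2 * (t - τ) := abs_of_nonneg (by linarith)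
    rw [ge_iff_le, one_div, inv_mul_le_iff₀ hC, div_mul_eq_mul_div,
      le_div_iff₀ (by linarith : (0:ℝ) < 1 - δ)]
    have hNnn : 0 ≤ N := Real.sqrt_nonneg _
    nlinarith [mul_nonneg hBnn hδ0.le, mul_nonneg hNnn hδ0.le]
  constructor
  · exact key (x + t - τ) (by rw [show x + t - τ - x = t - τ by ring, abs_of_nonneg (by linarith)])
  · exact key (x - t + τ) (by rw [show x - t + τ - x = -(t - τ) by ring, abs_neg, abs_of_nonneg (by linarith)])
end

section
/- Let t₁ < t₂, set h = (t₂ − t₁)/2 and m = (t₁ + t₂)/2, and let u be a C² solution of ∂ₜ²u = ∂ₓ²u + exp(u) on an open set containing the closed square Q̄ with vertices (x,t₁), (x + h, m), (x, t₂), (x − h, m). Then u(x,t₁) + u(x,t₂) = u(x + h, m) + u(x − h, m) + (1/2)·∬_Q exp(u(ξ,τ)) dξ dτ, where Q is the open square {(ξ,τ) : t₁ < τ < t₂, |ξ − x| < h − |τ − m|}. -/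
open MeasureTheory Filter Set Topology

private lemma wave_slice_x {U : Set (ℝ × ℝ)} (hU : IsOpen U) {F : ℝ × ℝ → ℝ}
    (hF : ContDiffOn ℝ 2 F U) {p : ℝ × ℝ} (hp : p ∈ U) :
    HasDerivAt (fun ξ => F (ξ, p.2)) (fderiv ℝ F p ((1:ℝ), (0:ℝ))) p.1 := by
  have hd : HasFDerivAt F (fderiv ℝ F p) p :=
    ((hF.contDiffAt (hU.mem_nhds hp)).differentiableAt two_ne_zero).hasFDerivAt
  exact hd.comp_hasDerivAt p.1 ((hasDerivAt_id p.1).prodMk (hasDerivAt_const p.1 p.2))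

private lemma wave_slice_t {U : Set (ℝ × ℝ)} (hU : IsOpen U) {F : ℝ × ℝ → ℝ}
    (hF : ContDiffOn ℝ 2 F U) {p : ℝ × ℝ} (hp : p ∈ U) :
    HasDerivAt (fun t => F (p.1, t)) (fderiv ℝ F p ((0:ℝ), (1:ℝ))) p.2 := by
  have hd : HasFDerivAt F (fderiv ℝ F p) p :=
    ((hF.contDiffAt (hU.mem_nhds hp)).differentiableAt two_ne_zero).hasFDerivAt
  exact hd.comp_hasDerivAt p.2 ((hasDerivAt_const p.2 p.1).prodMk (hasDerivAt_id p.2))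

private lemma wave_fderiv2 {U : Set (ℝ × ℝ)} (hU : IsOpen U) {F : ℝ × ℝ → ℝ}
    (hF : ContDiffOn ℝ 2 F U) {p : ℝ × ℝ} (hp : p ∈ U) :
    HasFDerivAt (fderiv ℝ F) (fderiv ℝ (fderiv ℝ F) p) p :=
  (((hF.contDiffAt (hU.mem_nhds hp)).fderiv_right (m := 1) (by norm_num)).differentiableAt
    one_ne_zero).hasFDerivAt

private lemma wave_snd_x {U : Set (ℝ × ℝ)} (hU : IsOpen U) {F : ℝ × ℝ → ℝ}
    (hF : ContDiffOn ℝ 2 F U) {p : ℝ × ℝ} (hp : p ∈ U) :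
    deriv (fun ξ => deriv (fun ξ' => F (ξ', p.2)) ξ) p.1
      = fderiv ℝ (fderiv ℝ F) p ((1:ℝ), (0:ℝ)) ((1:ℝ), (0:ℝ)) := by
  have hmem : ∀ᶠ ξ in 𝓝 p.1, ((ξ : ℝ), p.2) ∈ U := by
    have hc : Continuous fun ξ : ℝ => ((ξ : ℝ), p.2) := by fun_prop
    exact hc.continuousAt.preimage_mem_nhds (hU.mem_nhds hp)
  have hev : (fun ξ => deriv (fun ξ' => F (ξ', p.2)) ξ)
      =ᶠ[𝓝 p.1] fun ξ => fderiv ℝ F (ξ, p.2) ((1:ℝ), (0:ℝ)) := by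
    filter_upwards [hmem] with ξ hξ
    exact (wave_slice_x hU hF hξ).deriv
  rw [hev.deriv_eq]
  have h2 : HasDerivAt (fun ξ => fderiv ℝ F (ξ, p.2))
      (fderiv ℝ (fderiv ℝ F) p ((1:ℝ), (0:ℝ))) p.1 :=
    (wave_fderiv2 hU hF hp).comp_hasDerivAt p.1
      ((hasDerivAt_id p.1).prodMk (hasDerivAt_const p.1 p.2))
  have h3 := ((ContinuousLinearMap.apply ℝ ℝ ((1:ℝ), (0:ℝ))).hasFDerivAt).comp_hasDerivAt p.1 h2
  simpa [Function.comp_def] using h3.deriv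

private lemma wave_snd_t {U : Set (ℝ × ℝ)} (hU : IsOpen U) {F : ℝ × ℝ → ℝ}
    (hF : ContDiffOn ℝ 2 F U) {p : ℝ × ℝ} (hp : p ∈ U) :
    deriv (fun t => deriv (fun t' => F (p.1, t')) t) p.2
      = fderiv ℝ (fderiv ℝ F) p ((0:ℝ), (1:ℝ)) ((0:ℝ), (1:ℝ)) := by
  have hmem : ∀ᶠ t in 𝓝 p.2, (p.1, (t : ℝ)) ∈ U := by
    have hc : Continuous fun t : ℝ => (p.1, (t : ℝ)) := by fun_prop
    exact hc.continuousAt.preimage_mem_nhds (hU.mem_nhds hp)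
  have hev : (fun t => deriv (fun t' => F (p.1, t')) t)
      =ᶠ[𝓝 p.2] fun t => fderiv ℝ F (p.1, t) ((0:ℝ), (1:ℝ)) := by
    filter_upwards [hmem] with t htm
    exact (wave_slice_t hU hF htm).deriv
  rw [hev.deriv_eq]
  have h2 : HasDerivAt (fun t => fderiv ℝ F (p.1, t))
      (fderiv ℝ (fderiv ℝ F) p ((0:ℝ), (1:ℝ))) p.2 :=
    (wave_fderiv2 hU hF hp).comp_hasDerivAt p.2
      ((hasDerivAt_const p.2 p.1).prodMk (hasDerivAt_id p.2))
  have h3 := ((ContinuousLinearMap.apply ℝ ℝ ((0:ℝ), (1:ℝ))).hasFDerivAt).comp_hasDerivAt p.2 h2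
  simpa [Function.comp_def] using h3.deriv

theorem square_duhamel_identity (x t₁ t₂ : ℝ) (ht : t₁ < t₂)
    (U : Set (ℝ × ℝ)) (hU : IsOpen U)
    (hQ : {p : ℝ × ℝ | t₁ ≤ p.2 ∧ p.2 ≤ t₂ ∧
        |p.1 - x| ≤ (t₂ - t₁) / 2 - |p.2 - (t₁ + t₂) / 2|} ⊆ U)
    (u : ℝ → ℝ → ℝ)
    (hreg : ContDiffOn ℝ 2 (fun p : ℝ × ℝ => u p.1 p.2) U)
    (hwave : ∀ p ∈ U,
      deriv (deriv (u p.1)) p.2 =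
        deriv (fun ξ => deriv (fun ξ' => u ξ' p.2) ξ) p.1 + Real.exp (u p.1 p.2)) :
    u x t₁ + u x t₂ =
      u (x + (t₂ - t₁) / 2) ((t₁ + t₂) / 2) + u (x - (t₂ - t₁) / 2) ((t₁ + t₂) / 2)
        + (1/2) * ∫ p in {p : ℝ × ℝ | t₁ < p.2 ∧ p.2 < t₂ ∧
            |p.1 - x| < (t₂ - t₁) / 2 - |p.2 - (t₁ + t₂) / 2|}, Real.exp (u p.1 p.2) := by
  have hle : t₁ + x ≤ t₂ + x := by linarith
  have hle' : t₁ - x ≤ t₂ - x := by linarith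
  set F : ℝ × ℝ → ℝ := fun p => u p.1 p.2 with hFdef
  -- the linear change of variables
  set L : ℝ × ℝ →L[ℝ] ℝ × ℝ := LinearMap.toContinuousLinearMap
    (Matrix.toLin (Module.Basis.finTwoProd ℝ) (Module.Basis.finTwoProd ℝ) !![1/2, -1/2; 1/2, 1/2]) with hLdef
  have hLapp : ∀ p : ℝ × ℝ, L p = ((p.1 - p.2)/2, (p.1 + p.2)/2) := by
    intro p
    show (Matrix.toLin (Module.Basis.finTwoProd ℝ) (Module.Basis.finTwoProd ℝ) !![1/2, -1/2; 1/2, 1/2]) p = _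
    rw [Matrix.toLin_finTwoProd_apply]
    exact Prod.ext (by ring) (by ring)
  have hdet : |L.det| = 1/2 := by
    have : L.det = ((1:ℝ)/2) := by
      show LinearMap.det ((LinearMap.toContinuousLinearMap _ : (ℝ×ℝ) →L[ℝ] (ℝ×ℝ)) :
        (ℝ×ℝ) →ₗ[ℝ] (ℝ×ℝ)) = _
      rw [LinearMap.coe_toContinuousLinearMap, LinearMap.det_toLin, Matrix.det_fin_two_of]
      norm_num
    rw [this]; norm_num
  -- the closed rectangle maps into U
  have hsub : ∀ p : ℝ × ℝ, p.1 ∈ Icc (t₁ + x) (t₂ + x) → p.2 ∈ Icc (t₁ - x) (t₂ - x) →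
      L p ∈ U := by
    rintro ⟨s, r⟩ ⟨hs1, hs2⟩ ⟨hr1, hr2⟩
    apply hQ
    rw [hLapp]
    refine ⟨by dsimp; linarith, by dsimp; linarith, ?_⟩
    dsimp only
    rcases abs_cases (((s, r).1 - (s, r).2)/2 - x) with ⟨e1, _⟩|⟨e1, _⟩ <;>
      rcases abs_cases (((s + r))/2 - (t₁ + t₂)/2) with ⟨e2, _⟩|⟨e2, _⟩ <;>
      dsimp only at e1 <;> rw [e1, e2] <;> linarith
  -- the diamond is the image of the open rectangle
  have hQeq : {p : ℝ × ℝ | t₁ < p.2 ∧ p.2 < t₂ ∧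
      |p.1 - x| < (t₂ - t₁) / 2 - |p.2 - (t₁ + t₂) / 2|}
      = L '' (Ioo (t₁ + x) (t₂ + x) ×ˢ Ioo (t₁ - x) (t₂ - x)) := by
    ext ⟨ξ, τ⟩
    simp only [Set.mem_setOf_eq, Set.mem_image, Set.mem_prod, Set.mem_Ioo, Prod.exists]
    constructor
    · rintro ⟨h1, h2, h3⟩
      obtain ⟨ha, hb⟩ := abs_lt.mp h3
      have hn1 := neg_abs_le (τ - (t₁ + t₂)/2)
      have hn2 := le_abs_self (τ - (t₁ + t₂)/2)
      refine ⟨τ + ξ, τ - ξ, ⟨⟨by linarith, by linarith⟩, by linarith, by linarith⟩, ?_⟩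
      rw [hLapp]
      exact Prod.ext (by dsimp; ring) (by dsimp; ring)
    · rintro ⟨s, r, ⟨⟨hs1, hs2⟩, hr1, hr2⟩, heq⟩
      rw [hLapp, Prod.ext_iff] at heq
      obtain ⟨h1, h2⟩ := heq
      dsimp at h1 h2
      subst h1; subst h2
      refine ⟨by linarith, by linarith, ?_⟩
      rcases abs_cases ((s - r)/2 - x) with ⟨e1, _⟩|⟨e1, _⟩ <;>
        rcases abs_cases ((s + r)/2 - (t₁ + t₂)/2) with ⟨e2, _⟩|⟨e2, _⟩ <;>
        rw [e1, e2] <;> linarith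
  have hinj : Set.InjOn (⇑L) (Ioo (t₁ + x) (t₂ + x) ×ˢ Ioo (t₁ - x) (t₂ - x)) := by
    intro p _ q _ hpq
    rw [hLapp, hLapp, Prod.ext_iff] at hpq
    obtain ⟨h1, h2⟩ := hpq
    dsimp at h1 h2
    exact Prod.ext (by linarith) (by linarith)
  -- second-derivative facts
  have hsymm : ∀ q ∈ U, fderiv ℝ (fderiv ℝ F) q ((1:ℝ), (0:ℝ)) ((0:ℝ), (1:ℝ))
      = fderiv ℝ (fderiv ℝ F) q ((0:ℝ), (1:ℝ)) ((1:ℝ), (0:ℝ)) :=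
    fun q hq => (hreg.contDiffAt (hU.mem_nhds hq)).isSymmSndFDerivAt (by simp [minSmoothness_of_isRCLikeNormedField]) _ _
  have hA2 : ∀ q ∈ U, fderiv ℝ (fderiv ℝ F) q ((0:ℝ), (1:ℝ)) ((0:ℝ), (1:ℝ))
      = fderiv ℝ (fderiv ℝ F) q ((1:ℝ), (0:ℝ)) ((1:ℝ), (0:ℝ)) + Real.exp (F q) := by
    intro q hq
    rw [← wave_snd_t hU hreg hq, ← wave_snd_x hU hreg hq]
    exact hwave q hq
  set P : ℝ × ℝ → ℝ := fun q => fderiv ℝ F q ((1:ℝ)/2, (1:ℝ)/2) with hPdef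
  have hPder : ∀ q ∈ U, HasFDerivAt P
      ((ContinuousLinearMap.apply ℝ ℝ ((1:ℝ)/2, (1:ℝ)/2)).comp (fderiv ℝ (fderiv ℝ F) q)) q :=
    fun q hq => ((ContinuousLinearMap.apply ℝ ℝ ((1:ℝ)/2, (1:ℝ)/2)).hasFDerivAt).comp q (wave_fderiv2 hU hreg hq)
  have hds : ∀ s r : ℝ, L (s, r) ∈ U →
      HasDerivAt (fun s' => F (L (s', r))) (P (L (s, r))) s := by
    intro s r hq
    have hcurve : HasDerivAt (fun s' : ℝ => L (s', r)) (L ((1:ℝ), (0:ℝ))) s :=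
      L.hasFDerivAt.comp_hasDerivAt s ((hasDerivAt_id s).prodMk (hasDerivAt_const s r))
    have hF' : HasFDerivAt F (fderiv ℝ F (L (s, r))) (L (s, r)) :=
      ((hreg.contDiffAt (hU.mem_nhds hq)).differentiableAt two_ne_zero).hasFDerivAt
    have h2 := hF'.comp_hasDerivAt s hcurve
    have hv : L ((1:ℝ), (0:ℝ)) = ((1:ℝ)/2, (1:ℝ)/2) := by
      rw [hLapp]; norm_num
    rw [hv] at h2
    exact h2
  have hdr : ∀ s r : ℝ, L (s, r) ∈ U →
      HasDerivAt (fun r' => P (L (s, r'))) ((1/4) * Real.exp (F (L (s, r)))) r := by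
    intro s r hq
    have hcurve : HasDerivAt (fun r' : ℝ => L (s, r')) (L ((0:ℝ), (1:ℝ))) r :=
      L.hasFDerivAt.comp_hasDerivAt r ((hasDerivAt_const r s).prodMk (hasDerivAt_id r))
    have h1 := (hPder _ hq).comp_hasDerivAt r hcurve
    have hv : L ((0:ℝ), (1:ℝ)) = ((-1:ℝ)/2, (1:ℝ)/2) := by
      rw [hLapp]; norm_num
    rw [hv] at h1
    convert h1 using 1
    case e'_4 => rfl
    case e'_5 => rfl
    case e'_8 => rfl
    have e1 : ((-1:ℝ)/2, (1:ℝ)/2) = ((1:ℝ)/2) • ((0:ℝ), (1:ℝ)) - ((1:ℝ)/2) • ((1:ℝ), (0:ℝ)) := by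
      norm_num [Prod.ext_iff]
    have e2 : ((1:ℝ)/2, (1:ℝ)/2) = ((1:ℝ)/2) • ((1:ℝ), (0:ℝ)) + ((1:ℝ)/2) • ((0:ℝ), (1:ℝ)) := by
      norm_num [Prod.ext_iff]
    simp only [ContinuousLinearMap.coe_comp', ContinuousLinearMap.comp_apply, Function.comp_apply,
      ContinuousLinearMap.apply_apply]
    rw [e1, map_sub, _root_.map_smul, _root_.map_smul]
    simp only [ContinuousLinearMap.sub_apply, ContinuousLinearMap.smul_apply, smul_eq_mul]
    rw [e2]
    simp only [map_add, _root_.map_smul, ContinuousLinearMap.add_apply,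
      ContinuousLinearMap.smul_apply, smul_eq_mul]
    rw [hA2 _ hq, hsymm _ hq]
    ring
  -- continuity and integrability
  have hgc : ContinuousOn (fun p : ℝ × ℝ => Real.exp (F (L p)))
      (Icc (t₁ + x) (t₂ + x) ×ˢ Icc (t₁ - x) (t₂ - x)) := by
    apply Real.continuous_exp.comp_continuousOn
    exact hreg.continuousOn.comp L.continuous.continuousOn (fun p hp => hsub p hp.1 hp.2)
  have hIcc : IntegrableOn (fun p : ℝ × ℝ => Real.exp (F (L p)))
      (Icc (t₁ + x) (t₂ + x) ×ˢ Icc (t₁ - x) (t₂ - x)) volume :=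
    hgc.integrableOn_compact (isCompact_Icc.prod isCompact_Icc)
  have hIoo : IntegrableOn (fun p : ℝ × ℝ => Real.exp (F (L p)))
      (Ioo (t₁ + x) (t₂ + x) ×ˢ Ioo (t₁ - x) (t₂ - x)) volume :=
    hIcc.mono_set (prod_mono Ioo_subset_Icc_self Ioo_subset_Icc_self)
  have hPc : ContinuousOn P U := by
    have h1 : ContinuousOn (fderiv ℝ F) U := hreg.continuousOn_fderiv_of_isOpen hU one_le_two
    exact (ContinuousLinearMap.apply ℝ ℝ ((1:ℝ)/2, (1:ℝ)/2)).continuous.comp_continuousOn h1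
  -- corners
  have hc22 : L (t₂ + x, t₂ - x) = (x, t₂) := by
    rw [hLapp]; exact Prod.ext (by dsimp; ring) (by dsimp; ring)
  have hc21 : L (t₂ + x, t₁ - x) = (x + (t₂ - t₁)/2, (t₁ + t₂)/2) := by
    rw [hLapp]; exact Prod.ext (by dsimp; ring) (by dsimp; ring)
  have hc12 : L (t₁ + x, t₂ - x) = (x - (t₂ - t₁)/2, (t₁ + t₂)/2) := by
    rw [hLapp]; exact Prod.ext (by dsimp; ring) (by dsimp; ring)
  have hc11 : L (t₁ + x, t₁ - x) = (x, t₁) := by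
    rw [hLapp]; exact Prod.ext (by dsimp; ring) (by dsimp; ring)
  -- inner integral (FTC in r)
  have inner : ∀ s ∈ Icc (t₁ + x) (t₂ + x),
      (∫ r in Ioo (t₁ - x) (t₂ - x), Real.exp (F (L (s, r))))
        = 4 * P (L (s, t₂ - x)) - 4 * P (L (s, t₁ - x)) := by
    intro s hs
    rw [← integral_Ioc_eq_integral_Ioo, ← intervalIntegral.integral_of_le hle']
    have h1 : ∀ r ∈ uIcc (t₁ - x) (t₂ - x),
        HasDerivAt (fun r => 4 * P (L (s, r))) (Real.exp (F (L (s, r)))) r := by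
      intro r hr
      rw [uIcc_of_le hle'] at hr
      have hm := hsub (s, r) hs hr
      have h4 := HasDerivAt.const_mul (4:ℝ) (hdr s r hm)
      have he : (4:ℝ) * (1/4 * Real.exp (F (L (s, r)))) = Real.exp (F (L (s, r))) := by ring
      rwa [he] at h4
    have h2 : IntervalIntegrable (fun r => Real.exp (F (L (s, r)))) volume (t₁ - x) (t₂ - x) := by
      apply ContinuousOn.intervalIntegrable
      rw [uIcc_of_le hle']
      exact hgc.comp (Continuous.continuousOn (by fun_prop))
        (fun r hr => Set.mk_mem_prod hs hr)
    rw [intervalIntegral.integral_eq_sub_of_hasDerivAt h1 h2]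
  -- Fubini + outer FTC in s
  have fubini : (∫ p in Ioo (t₁ + x) (t₂ + x) ×ˢ Ioo (t₁ - x) (t₂ - x),
      Real.exp (F (L p)))
      = 4 * (F (x, t₂) - F (x + (t₂ - t₁)/2, (t₁ + t₂)/2)
          - F (x - (t₂ - t₁)/2, (t₁ + t₂)/2) + F (x, t₁)) := by
    rw [MeasureTheory.Measure.volume_eq_prod] at hIoo ⊢
    rw [setIntegral_prod _ hIoo]
    rw [setIntegral_congr_fun measurableSet_Ioo
      (fun s hs => inner s (Ioo_subset_Icc_self hs))]
    rw [← integral_Ioc_eq_integral_Ioo, ← intervalIntegral.integral_of_le hle]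
    have h1 : ∀ s ∈ uIcc (t₁ + x) (t₂ + x),
        HasDerivAt (fun s => 4 * F (L (s, t₂ - x)) - 4 * F (L (s, t₁ - x)))
          (4 * P (L (s, t₂ - x)) - 4 * P (L (s, t₁ - x))) s := by
      intro s hsm
      rw [uIcc_of_le hle] at hsm
      exact (HasDerivAt.const_mul (4:ℝ)
          (hds s (t₂ - x) (hsub _ (by exact hsm) (right_mem_Icc.mpr hle')))).sub
        (HasDerivAt.const_mul (4:ℝ)
          (hds s (t₁ - x) (hsub _ (by exact hsm) (left_mem_Icc.mpr hle'))))
    have h2 : IntervalIntegrable (fun s => 4 * P (L (s, t₂ - x)) - 4 * P (L (s, t₁ - x)))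
        volume (t₁ + x) (t₂ + x) := by
      apply ContinuousOn.intervalIntegrable
      rw [uIcc_of_le hle]
      apply ContinuousOn.sub
      · exact continuousOn_const.mul (hPc.comp (Continuous.continuousOn (by fun_prop))
          (fun s hsm => hsub _ (by exact hsm) (right_mem_Icc.mpr hle')))
      · exact continuousOn_const.mul (hPc.comp (Continuous.continuousOn (by fun_prop))
          (fun s hsm => hsub _ (by exact hsm) (left_mem_Icc.mpr hle')))
    rw [intervalIntegral.integral_eq_sub_of_hasDerivAt h1 h2]
    rw [hc22, hc21, hc12, hc11]
    ring
  -- change of variables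
  have hFint : (fun p : ℝ × ℝ => Real.exp (u p.1 p.2)) = fun p => Real.exp (F p) := rfl
  have key : (∫ p in {p : ℝ × ℝ | t₁ < p.2 ∧ p.2 < t₂ ∧
      |p.1 - x| < (t₂ - t₁) / 2 - |p.2 - (t₁ + t₂) / 2|}, Real.exp (u p.1 p.2))
      = 2 * (F (x, t₂) - F (x + (t₂ - t₁)/2, (t₁ + t₂)/2)
          - F (x - (t₂ - t₁)/2, (t₁ + t₂)/2) + F (x, t₁)) := by
    rw [hFint, hQeq]
    rw [integral_image_eq_integral_abs_det_fderiv_smul volume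
      (measurableSet_Ioo.prod measurableSet_Ioo)
      (fun p _ => L.hasFDerivAt.hasFDerivWithinAt) hinj]
    simp only [hdet, smul_eq_mul]
    rw [MeasureTheory.integral_const_mul, fubini]
    ring
  rw [key]
  simp only [hFdef]
  ring
end
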